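/- Fix k ∈ ℕ with k ≥ 2, and let B be the real (2^k − 1) × (2^k − 1) matrix with rows and columns indexed by the nonzero vectors of {0,1}^k, where B_{uv} = ⟨u,v⟩ mod 2 (viewed as a real number). Then B is invertible, and for every vector v ∈ ℝ^{2^k − 1}, ‖B^{-1}v‖_∞ ≤ 2‖v‖_∞. -/

import Mathlib

/-- The real `(2^k − 1) × (2^k − 1)` matrix indexed by nonzero vectors of `𝔽₂^k`,
with `B_{uv} = ⟨u,v⟩ mod 2`, viewed as a real number `0` or `1`. -/
def Bmat (k : ℕ) : Matrix {v : Fin k → ZMod 2 // v ≠ 0} {v : Fin k → ZMod 2 // v ≠ 0} ℝ :=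
  Matrix.of fun u v => if dotProduct u.1 v.1 = 1 then 1 else 0

/-!
Writing `χ u v = (-1)^⟨u,v⟩`, we have `B = (J - H) / 2` with `J` the all-ones matrix and
`H = (χ u v)` the Walsh–Hadamard matrix restricted to nonzero indices. The orthogonality
relations `∑_v χ u v = 2^k [u = 0]` show that `B⁻¹ = -(2 / 2^k) H`. Each row of `B⁻¹` has fewer
than `2^k` entries, all of absolute value `2 / 2^k`, so `B⁻¹` has `ℓ^∞` operator norm at most `2`.
-/

open Finset Matrix

lemma Matrix.norm_mulVec_le_of_forall_norm_le {m n α : Type*} [Fintype m] [Fintype n]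
    [SeminormedRing α] (A : Matrix m n α) {c : ℝ} (hc : 0 ≤ c) (hA : ∀ i j, ‖A i j‖ ≤ c)
    (x : n → α) : ‖A *ᵥ x‖ ≤ Fintype.card n * c * ‖x‖ := by
  refine (pi_norm_le_iff_of_nonneg (by positivity)).2 fun i => ?_
  calc ‖(A *ᵥ x) i‖ ≤ ∑ j, ‖A i j * x j‖ := norm_sum_le _ _
    _ ≤ ∑ _j : n, c * ‖x‖ := sum_le_sum fun j _ =>
        (norm_mul_le _ _).trans (mul_le_mul (hA i j) (norm_le_pi_norm x j) (norm_nonneg _) hc)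
    _ = Fintype.card n * c * ‖x‖ := by rw [sum_const, card_univ, nsmul_eq_mul, mul_assoc]

noncomputable def ZMod.signChar : AddChar (ZMod 2) ℝ :=
  AddChar.zmodChar 2 (show (-1 : ℝ) ^ 2 = 1 by norm_num)

lemma ZMod.signChar_apply (a : ZMod 2) : signChar a = if a = 1 then -1 else 1 := by
  obtain rfl | rfl : a = 0 ∨ a = 1 := by decide +revert
  · simp
  · simp [signChar, AddChar.zmodChar_apply, ZMod.val_one]

lemma ZMod.signChar_eq_one_iff {a : ZMod 2} : signChar a = 1 ↔ a = 0 := by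
  obtain rfl | rfl : a = 0 ∨ a = 1 := by decide +revert
  all_goals norm_num [signChar_apply]

section Walsh

variable {ι : Type*} [Fintype ι]

noncomputable def walshChar (u : ι → ZMod 2) : AddChar (ι → ZMod 2) ℝ :=
  ZMod.signChar.compAddMonoidHom (AddMonoidHom.mk' (u ⬝ᵥ ·) (dotProduct_add u))

lemma walshChar_apply (u v : ι → ZMod 2) : walshChar u v = ZMod.signChar (u ⬝ᵥ v) := rfl

lemma walshChar_comm (u v : ι → ZMod 2) : walshChar u v = walshChar v u := by
  rw [walshChar_apply, walshChar_apply, dotProduct_comm]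

lemma walshChar_mul_walshChar (u w v : ι → ZMod 2) :
    walshChar u v * walshChar w v = walshChar (u + w) v := by
  rw [walshChar_apply, walshChar_apply, walshChar_apply, add_dotProduct,
    AddChar.map_add_eq_mul]

lemma walshChar_eq_zero_iff {u : ι → ZMod 2} : walshChar u = 0 ↔ u = 0 := by
  simp only [AddChar.ext_iff, AddChar.zero_apply, walshChar_apply, ZMod.signChar_eq_one_iff,
    dotProduct_eq_zero_iff]

lemma sum_walshChar [DecidableEq ι] (u : ι → ZMod 2) :
    ∑ v, walshChar u v = if u = 0 then 2 ^ Fintype.card ι else 0 := by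
  classical
  rw [AddChar.sum_eq_ite]
  simp [walshChar_eq_zero_iff]

end Walsh

noncomputable def BmatInv (k : ℕ) :
    Matrix {v : Fin k → ZMod 2 // v ≠ 0} {v : Fin k → ZMod 2 // v ≠ 0} ℝ :=
  Matrix.of fun u v => -(2 / 2 ^ k) * walshChar u.1 v.1

lemma Bmat_apply (k : ℕ) (u v : {v : Fin k → ZMod 2 // v ≠ 0}) :
    Bmat k u v = (1 - walshChar u.1 v.1) / 2 := by
  rw [Bmat, of_apply, walshChar_apply, ZMod.signChar_apply]
  split_ifs <;> norm_num

lemma Bmat_mul_BmatInv (k : ℕ) : Bmat k * BmatInv k = 1 := by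
  ext u w
  let f (v : Fin k → ZMod 2) : ℝ := (walshChar (u.1 + w.1) v - walshChar w.1 v) / 2 ^ k
  have hterm (v : {v : Fin k → ZMod 2 // v ≠ 0}) : Bmat k u v * BmatInv k v w = f v := by
    simp only [f, Bmat_apply, BmatInv, of_apply, walshChar_comm v.1 w.1,
      ← walshChar_mul_walshChar]
    field_simp
    ring
  have huw : u.1 + w.1 = 0 ↔ u = w := by
    rw [add_eq_zero_iff_eq_neg, ZModModule.neg_eq_self, Subtype.ext_iff]
  calc (Bmat k * BmatInv k) u w = ∑ v : {v : Fin k → ZMod 2 // v ≠ 0}, f v :=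
        sum_congr rfl fun v _ => hterm v
    _ = ∑ v, f v := by
        rw [Fintype.sum_eq_add_sum_subtype_ne f 0, show f 0 = 0 by simp [f], zero_add]
    _ = (1 : Matrix _ _ ℝ) u w := by
        simp only [f, ← sum_div, sum_sub_distrib, sum_walshChar, w.2, huw, Fintype.card_fin,
          if_false, sub_zero, one_apply]
        split_ifs <;> simp

theorem Bmat_inv_bound_general (k : ℕ) :
    IsUnit (Bmat k) ∧
      ∀ v : {v : Fin k → ZMod 2 // v ≠ 0} → ℝ, ‖(Bmat k)⁻¹.mulVec v‖ ≤ 2 * ‖v‖ := by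
  have hB := Bmat_mul_BmatInv k
  refine ⟨(isUnit_iff_isUnit_det _).2 (isUnit_det_of_right_inverse hB), fun x => ?_⟩
  have hentry (u v : {v : Fin k → ZMod 2 // v ≠ 0}) : ‖BmatInv k u v‖ ≤ 2 / 2 ^ k := by
    simp [BmatInv]
  have hcard : (Fintype.card {v : Fin k → ZMod 2 // v ≠ 0} : ℝ) ≤ 2 ^ k := by
    exact_mod_cast (Fintype.card_subtype_le _).trans_eq (by simp)
  rw [inv_eq_right_inv hB]
  calc ‖BmatInv k *ᵥ x‖ ≤ Fintype.card {v : Fin k → ZMod 2 // v ≠ 0} * (2 / 2 ^ k) * ‖x‖ :=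
        norm_mulVec_le_of_forall_norm_le _ (by positivity) hentry x
    _ ≤ 2 ^ k * (2 / 2 ^ k) * ‖x‖ := by gcongr
    _ = 2 * ‖x‖ := by field_simp

/-- `B` is invertible and `‖B⁻¹v‖_∞ ≤ 2‖v‖_∞` for every `v` (the norm on
`{v // v ≠ 0} → ℝ` is the entrywise sup norm). -/
theorem Bmat_inv_bound (k : ℕ) (hk : 2 ≤ k) :
    IsUnit (Bmat k) ∧
      ∀ v : {v : Fin k → ZMod 2 // v ≠ 0} → ℝ, ‖(Bmat k)⁻¹.mulVec v‖ ≤ 2 * ‖v‖ :=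
  Bmat_inv_bound_general k
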